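/- Let T > 0 and K > 0 be constants. Let α and β be nonnegative functions in L¹((0,T)). Let A and B be integrable functions on (0,T) with A(t) ≥ 1 and B(t) > 0 for all t, such that A is absolutely continuous on (0,T) and continuous on [0,T), and suppose that for (almost every) t ∈ (0,T) one has A'(t) + B(t) ≤ K(α(t) + log B(t))·A(t) + β(t). Then for all t ∈ [0,T), log A(t) + ∫₀ᵗ B(s)/(2A(s)) ds ≤ Q(t), where Q(t) = (log A(0) + K·∫₀ᵗ α(s) ds + ∫₀ᵗ β(s) ds + 2K²t)·e^{Kt}. In particular, A(t) ≤ e^{Q(t)} and ∫₀ᵗ B(s)/A(s) ds ≤ 2Q(t) for all t ∈ [0,T). -/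

import Mathlib

/-!
Dividing the differential inequality by `A ≥ 1` and writing `log B = log (B / A) + log A`, the
Young-type bound `K log (B / A) ≤ B / (2A) + 2K²` absorbs half of the dissipation `B / A`:
`(log A)' + B / (2A) ≤ K log A + ψ` almost everywhere, where `ψ = Kα + β + 2K² ≥ 0`. As `A` is
absolutely continuous and bounded below, so is `log A`, with derivative `A' / A` almost
everywhere. Integrating, and using `log A ≤ g`, where `g(s) = log A(s) + ∫₀ˢ B / (2A)`, gives
`g(s) ≤ log A(0) + ∫₀ᵗ ψ + K ∫₀ˢ g` for `s ≤ t`, and the integral form of Gronwall's inequality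
gives `g(t) ≤ (log A(0) + ∫₀ᵗ ψ) e^{Kt}`.
-/

open MeasureTheory Set Filter Real
open scoped NNReal

theorem LipschitzOnWith.comp_absolutelyContinuousOnInterval {X Y : Type*}
    [PseudoMetricSpace X] [PseudoMetricSpace Y] {f : ℝ → X} {g : X → Y} {K : ℝ≥0} {s : Set X}
    {a b : ℝ} (hg : LipschitzOnWith K g s) (hf : AbsolutelyContinuousOnInterval f a b)
    (hfs : MapsTo f (uIcc a b) s) : AbsolutelyContinuousOnInterval (g ∘ f) a b := by
  unfold AbsolutelyContinuousOnInterval at hf ⊢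
  refine squeeze_zero' (.of_forall fun _ ↦ Finset.sum_nonneg fun _ _ ↦ dist_nonneg) ?_
    (by simpa using hf.const_mul (K : ℝ))
  rw [eventually_inf_principal]
  filter_upwards with E hE
  rw [Finset.mul_sum]
  gcongr with i hi
  exact hg.dist_le_mul _ (hfs (hE.1 i hi).1) _ (hfs (hE.1 i hi).2)

theorem Real.lipschitzOnWith_log_Ici {c : ℝ} (hc : 0 < c) :
    LipschitzOnWith (Real.toNNReal c⁻¹) log (Ici c) := by
  refine (convex_Ici c).lipschitzOnWith_of_nnnorm_hasDerivWithin_le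
    (fun x hx ↦ (hasDerivAt_log (hc.trans_le hx).ne').hasDerivWithinAt) fun x hx ↦ ?_
  rw [← NNReal.coe_le_coe, coe_nnnorm, Real.coe_toNNReal _ (inv_nonneg.2 hc.le),
    norm_of_nonneg (inv_nonneg.2 (hc.trans_le hx).le)]
  exact inv_anti₀ hc hx

theorem continuousOn_of_eq_add_integral {f f' : ℝ → ℝ} {a b : ℝ}
    (hf' : IntervalIntegrable f' volume a b) (hf : ∀ x ∈ uIcc a b, f x = f a + ∫ y in a..x, f' y) :
    ContinuousOn f (uIcc a b) :=
  (continuousOn_const.add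
    (intervalIntegral.continuousOn_primitive_interval' hf' left_mem_uIcc)).congr hf

theorem integral_div_eq_log_sub_log {f f' : ℝ → ℝ} {a b : ℝ}
    (hf' : IntervalIntegrable f' volume a b) (hf : ∀ x ∈ uIcc a b, f x = f a + ∫ y in a..x, f' y)
    (hf_pos : ∀ x ∈ uIcc a b, 0 < f x) :
    ∫ x in a..b, f' x / f x = log (f b) - log (f a) := by
  set F : ℝ → ℝ := fun x ↦ f a + ∫ y in a..x, f' y
  have hF_ac : AbsolutelyContinuousOnInterval F a b :=
    (LipschitzWith.const (f a)).lipschitzOnWith.absolutelyContinuousOnInterval.add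
      (hf'.absolutelyContinuousOnInterval_intervalIntegral left_mem_uIcc)
  obtain ⟨m, hm, hm_min⟩ :=
    isCompact_uIcc.exists_isMinOn nonempty_uIcc (continuousOn_of_eq_add_integral hf' hf)
  have hlogF_ac : AbsolutelyContinuousOnInterval (log ∘ F) a b :=
    (lipschitzOnWith_log_Ici (hf_pos m hm)).comp_absolutelyContinuousOnInterval hF_ac
      fun x hx ↦ (hm_min hx).trans_eq (hf x hx)
  have hderiv : ∀ᵐ x, x ∈ uIoc a b → deriv (log ∘ F) x = f' x / f x := by
    filter_upwards [hf'.ae_hasDerivAt_integral] with x hx hxI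
    have hxI' := uIoc_subset_uIcc hxI
    rw [hf x hxI']
    exact (((hx hxI' a left_mem_uIcc).const_add (f a)).log (hf x hxI' ▸ hf_pos x hxI').ne').deriv
  rw [← intervalIntegral.integral_congr_ae hderiv, hlogF_ac.integral_deriv_eq_sub]
  simp [F, ← hf b right_mem_uIcc]

theorem add_mul_gronwallBound_zero (c K x : ℝ) :
    c + K * gronwallBound 0 K c x = c * exp (K * x) := by
  rcases eq_or_ne K 0 with rfl | hK
  · simp
  · rw [gronwallBound_of_K_ne_0 hK]
    field_simp
    ring

/-- The primitive `G = ∫ g` satisfies `G' = g ≤ c + K G`, so the differential Gronwall inequality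
bounds `G`, and with it `g`. -/
theorem le_mul_exp_of_le_add_mul_integral {g : ℝ → ℝ} {a b c K : ℝ} (hK : 0 ≤ K)
    (hg : ContinuousOn g (Icc a b)) (h : ∀ x ∈ Icc a b, g x ≤ c + K * ∫ y in a..x, g y) :
    ∀ x ∈ Icc a b, g x ≤ c * exp (K * (x - a)) := by
  intro x hx
  have hab : a ≤ b := hx.1.trans hx.2
  set G : ℝ → ℝ := fun z ↦ ∫ y in a..z, g y
  have hG_cont : ContinuousOn G (Icc a b) := by
    simpa [uIcc_of_le hab] using
      intervalIntegral.continuousOn_primitive_interval' (hg.intervalIntegrable_of_Icc hab)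
        left_mem_uIcc
  have hG_deriv : ∀ y ∈ Ico a b, HasDerivWithinAt G (g y) (Ici y) y := fun y hy ↦
    intervalIntegral.integral_hasDerivWithinAt_right
      ((hg.mono (Icc_subset_Icc le_rfl hy.2.le)).intervalIntegrable_of_Icc hy.1)
      ((hg.stronglyMeasurableAtFilter_nhdsWithin measurableSet_Icc y).filter_mono
        (nhdsWithin_le_of_mem (Icc_mem_nhdsGT_of_mem hy)))
      ((hg y (Ico_subset_Icc_self hy)).mono_of_mem_nhdsWithin (Icc_mem_nhdsGT_of_mem hy))
  have hG_le : G x ≤ gronwallBound 0 K c (x - a) :=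
    le_gronwallBound_of_liminf_deriv_right_le hG_cont
      (fun y hy _ hr ↦ (hG_deriv y hy).liminf_right_slope_le hr) (by simp [G])
      (fun y hy ↦ by linarith [h y (Ico_subset_Icc_self hy)]) x hx
  calc g x ≤ c + K * G x := h x hx
    _ ≤ c + K * gronwallBound 0 K c (x - a) := by gcongr
    _ = c * exp (K * (x - a)) := add_mul_gronwallBound_zero c K (x - a)

theorem mul_log_le_half_add_two_mul_sq {K y : ℝ} (hK : 0 < K) (hy : 0 < y) :
    K * log y ≤ y / 2 + 2 * K ^ 2 := by
  have h2K : 0 < 2 * K := by positivity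
  have hsplit : log y = log (y / (2 * K)) + log (2 * K) := by
    rw [log_div hy.ne' h2K.ne']
    ring
  have h1 := log_le_sub_one_of_pos (div_pos hy h2K)
  have h2 := log_le_sub_one_of_pos h2K
  calc K * log y = K * log (y / (2 * K)) + K * log (2 * K) := by rw [hsplit]; ring
    _ ≤ K * (y / (2 * K) - 1) + K * (2 * K - 1) := by gcongr
    _ = y / 2 + 2 * K ^ 2 - 2 * K := by field_simp; ring
    _ ≤ y / 2 + 2 * K ^ 2 := by linarith

theorem div_add_div_two_mul_le_of_add_le {K a a' b α β : ℝ} (hK : 0 < K) (ha : 1 ≤ a)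
    (hb : 0 < b) (hβ : 0 ≤ β) (h : a' + b ≤ K * (α + log b) * a + β) :
    a' / a + b / (2 * a) ≤ K * log a + (K * α + β + 2 * K ^ 2) := by
  have ha0 : 0 < a := one_pos.trans_le ha
  have hlog : K * log b ≤ b / a / 2 + 2 * K ^ 2 + K * log a := by
    have := mul_log_le_half_add_two_mul_sq hK (div_pos hb ha0)
    rw [log_div hb.ne' ha0.ne'] at this
    linarith
  have hdiv : (a' + b) / a ≤ K * α + K * log b + β / a := by
    rw [div_le_iff₀ ha0, add_mul, div_mul_cancel₀ _ ha0.ne', ← mul_add]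
    exact h
  have hβa : β / a ≤ β := div_le_self hβ ha
  have e1 : (a' + b) / a = a' / a + b / a := add_div _ _ _
  have e2 : b / (2 * a) = b / a / 2 := by ring
  linarith

theorem integral_mono_upper_of_nonneg_on_Ioo {f : ℝ → ℝ} {a x y : ℝ} (hax : a ≤ x) (hxy : x ≤ y)
    (hf : IntervalIntegrable f volume a y) (hf_nonneg : ∀ z ∈ Ioo a y, 0 ≤ f z) :
    ∫ z in a..x, f z ≤ ∫ z in a..y, f z := by
  refine intervalIntegral.integral_mono_interval le_rfl hax hxy ?_ hf
  rw [← Measure.restrict_congr_set Ioo_ae_eq_Ioc]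
  exact ae_restrict_of_forall_mem measurableSet_Ioo hf_nonneg

theorem log_add_integral_le_add_mul_integral {A A' f ψ : ℝ → ℝ} {a b K : ℝ} (hK : 0 ≤ K)
    (hA' : IntervalIntegrable A' volume a b) (hA : ∀ x ∈ Icc a b, A x = A a + ∫ y in a..x, A' y)
    (hA_pos : ∀ x ∈ Icc a b, 0 < A x)
    (hf : IntervalIntegrable f volume a b) (hf_nonneg : ∀ x ∈ Ioo a b, 0 ≤ f x)
    (hψ : IntervalIntegrable ψ volume a b) (hψ_nonneg : ∀ x ∈ Ioo a b, 0 ≤ ψ x)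
    (h : ∀ᵐ x ∂volume.restrict (Ioo a b), A' x / A x + f x ≤ K * log (A x) + ψ x) :
    ∀ x ∈ Icc a b, log (A x) + ∫ y in a..x, f y ≤
      log (A a) + (∫ y in a..b, ψ y) + K * ∫ y in a..x, (log (A y) + ∫ z in a..y, f z) := by
  intro x hx
  have hIcc : Icc a x ⊆ Icc a b := Icc_subset_Icc_right hx.2
  have hIcc' : uIcc a x ⊆ Icc a b := uIcc_of_le hx.1 ▸ hIcc
  have hsub : uIcc a x ⊆ uIcc a b := hIcc'.trans Icc_subset_uIcc
  have hA_cont : ContinuousOn A (Icc a x) :=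
    uIcc_of_le hx.1 ▸ continuousOn_of_eq_add_integral (hA'.mono_set hsub) fun y hy ↦ hA y (hIcc' hy)
  have hlog : log (A x) = log (A a) + ∫ y in a..x, A' y / A y := by
    rw [integral_div_eq_log_sub_log (hA'.mono_set hsub) (fun y hy ↦ hA y (hIcc' hy))
      (fun y hy ↦ hA_pos y (hIcc' hy))]
    ring
  have hA'A : IntervalIntegrable (fun y ↦ A' y / A y) volume a x := by
    simpa only [div_eq_mul_inv] using (hA'.mono_set hsub).mul_continuousOn
      (uIcc_of_le hx.1 ▸ hA_cont.inv₀ fun y hy ↦ (hA_pos y (hIcc hy)).ne')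
  have hlogA_cont : ContinuousOn (fun y ↦ log (A y)) (Icc a x) :=
    hA_cont.log fun y hy ↦ (hA_pos y (hIcc hy)).ne'
  have hg : IntervalIntegrable (fun y ↦ log (A y) + ∫ z in a..y, f z) volume a x := by
    refine (hlogA_cont.add ?_).intervalIntegrable_of_Icc hx.1
    simpa [uIcc_of_le hx.1] using
      intervalIntegral.continuousOn_primitive_interval' (hf.mono_set hsub) left_mem_uIcc
  have hineq : ∀ᵐ y ∂volume.restrict (Icc a x), A' y / A y + f y ≤ K * log (A y) + ψ y := by
    rw [← Measure.restrict_congr_set Ioo_ae_eq_Icc]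
    exact ae_restrict_of_ae_restrict_of_subset (Ioo_subset_Ioo_right hx.2) h
  have hlogA : IntervalIntegrable (fun y ↦ log (A y)) volume a x :=
    hlogA_cont.intervalIntegrable_of_Icc hx.1
  calc log (A x) + ∫ y in a..x, f y = log (A a) + ∫ y in a..x, (A' y / A y + f y) := by
        rw [intervalIntegral.integral_add hA'A (hf.mono_set hsub), hlog]
        ring
    _ ≤ log (A a) + ∫ y in a..x, (K * log (A y) + ψ y) := by
        gcongr 1
        exact intervalIntegral.integral_mono_ae_restrict hx.1 (hA'A.add (hf.mono_set hsub))
          ((hlogA.const_mul K).add (hψ.mono_set hsub)) hineq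
    _ = log (A a) + K * (∫ y in a..x, log (A y)) + ∫ y in a..x, ψ y := by
        rw [intervalIntegral.integral_add (hlogA.const_mul K) (hψ.mono_set hsub),
          intervalIntegral.integral_const_mul]
        ring
    _ ≤ log (A a) + K * (∫ y in a..x, (log (A y) + ∫ z in a..y, f z)) + ∫ y in a..b, ψ y := by
        gcongr
        · refine intervalIntegral.integral_mono_on hx.1 hlogA hg fun y hy ↦ ?_
          have := integral_mono_upper_of_nonneg_on_Ioo le_rfl hy.1 (hf.mono_set
            (uIcc_subset_uIcc left_mem_uIcc (hsub (Icc_subset_uIcc hy))))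
            fun z hz ↦ hf_nonneg z ⟨hz.1, hz.2.trans_le (hy.2.trans hx.2)⟩
          simp only [intervalIntegral.integral_same] at this
          linarith
        · exact integral_mono_upper_of_nonneg_on_Ioo hx.1 hx.2 hψ hψ_nonneg
    _ = _ := by ring

theorem log_add_integral_le_mul_exp {A A' f ψ : ℝ → ℝ} {a b K : ℝ} (hK : 0 ≤ K) (hab : a ≤ b)
    (hA' : IntervalIntegrable A' volume a b) (hA : ∀ x ∈ Icc a b, A x = A a + ∫ y in a..x, A' y)
    (hA_pos : ∀ x ∈ Icc a b, 0 < A x)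
    (hf : IntervalIntegrable f volume a b) (hf_nonneg : ∀ x ∈ Ioo a b, 0 ≤ f x)
    (hψ : IntervalIntegrable ψ volume a b) (hψ_nonneg : ∀ x ∈ Ioo a b, 0 ≤ ψ x)
    (h : ∀ᵐ x ∂volume.restrict (Ioo a b), A' x / A x + f x ≤ K * log (A x) + ψ x) :
    log (A b) + ∫ x in a..b, f x ≤ (log (A a) + ∫ x in a..b, ψ x) * exp (K * (b - a)) := by
  have hA_cont : ContinuousOn A (Icc a b) :=
    uIcc_of_le hab ▸ continuousOn_of_eq_add_integral hA' fun x hx ↦ hA x (uIcc_of_le hab ▸ hx)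
  have hg_cont : ContinuousOn (fun x ↦ log (A x) + ∫ y in a..x, f y) (Icc a b) := by
    refine (hA_cont.log fun x hx ↦ (hA_pos x hx).ne').add ?_
    simpa [uIcc_of_le hab] using intervalIntegral.continuousOn_primitive_interval' hf left_mem_uIcc
  simpa using le_mul_exp_of_le_add_mul_integral hK hg_cont
    (log_add_integral_le_add_mul_integral hK hA' hA hA_pos hf hf_nonneg hψ hψ_nonneg h) b
    ⟨hab, le_rfl⟩

theorem log_add_integral_div_two_mul_le {A A' B α β : ℝ → ℝ} {a b K : ℝ} (hK : 0 < K)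
    (hab : a ≤ b) (hA' : IntervalIntegrable A' volume a b)
    (hA : ∀ x ∈ Icc a b, A x = A a + ∫ y in a..x, A' y) (hA_one : ∀ x ∈ Icc a b, 1 ≤ A x)
    (hB : IntervalIntegrable B volume a b) (hB_pos : ∀ x ∈ Ioo a b, 0 < B x)
    (hα : IntervalIntegrable α volume a b) (hα_nonneg : ∀ x ∈ Ioo a b, 0 ≤ α x)
    (hβ : IntervalIntegrable β volume a b) (hβ_nonneg : ∀ x ∈ Ioo a b, 0 ≤ β x)
    (h : ∀ᵐ x ∂volume.restrict (Ioo a b), A' x + B x ≤ K * (α x + log (B x)) * A x + β x) :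
    log (A b) + ∫ x in a..b, B x / (2 * A x) ≤
      (log (A a) + K * (∫ x in a..b, α x) + (∫ x in a..b, β x) + 2 * K ^ 2 * (b - a)) *
        exp (K * (b - a)) := by
  have hA_pos : ∀ x ∈ Icc a b, 0 < A x := fun x hx ↦ one_pos.trans_le (hA_one x hx)
  have hA_cont : ContinuousOn A (uIcc a b) :=
    continuousOn_of_eq_add_integral hA' fun x hx ↦ hA x (uIcc_of_le hab ▸ hx)
  have hf : IntervalIntegrable (fun x ↦ B x / (2 * A x)) volume a b := by
    simpa only [div_eq_mul_inv, Pi.inv_apply, Pi.mul_apply] using hB.mul_continuousOn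
      ((continuousOn_const.mul hA_cont).inv₀ fun x hx ↦
        (mul_pos two_pos (hA_pos x (uIcc_of_le hab ▸ hx))).ne')
  have hαβ := (hα.const_mul K).add hβ
  have hψ_eq : log (A a) + K * (∫ x in a..b, α x) + (∫ x in a..b, β x) + 2 * K ^ 2 * (b - a) =
      log (A a) + ∫ x in a..b, (K * α x + β x + 2 * K ^ 2) := by
    rw [intervalIntegral.integral_add hαβ intervalIntegrable_const,
      intervalIntegral.integral_add (hα.const_mul K) hβ, intervalIntegral.integral_const_mul,
      intervalIntegral.integral_const, smul_eq_mul]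
    ring
  rw [hψ_eq]
  refine log_add_integral_le_mul_exp hK.le hab hA' hA hA_pos hf
    (fun x hx ↦ div_nonneg (hB_pos x hx).le (by linarith [hA_pos x (Ioo_subset_Icc_self hx)]))
    (hαβ.add intervalIntegrable_const)
    (fun x hx ↦ by have := hα_nonneg x hx; have := hβ_nonneg x hx; positivity) ?_
  filter_upwards [h, ae_restrict_mem measurableSet_Ioo] with x hx hxI
  exact div_add_div_two_mul_le_of_add_le hK (hA_one x (Ioo_subset_Icc_self hxI)) (hB_pos x hxI)
    (hβ_nonneg x hxI) hx

theorem log_gronwall_intermediate_step_general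
    (T K : ℝ) (hK : 0 < K)
    (α β A B A' : ℝ → ℝ)
    (hα_nonneg : ∀ t ∈ Ioo (0:ℝ) T, 0 ≤ α t)
    (hβ_nonneg : ∀ t ∈ Ioo (0:ℝ) T, 0 ≤ β t)
    (hα_int : IntegrableOn α (Ioo 0 T))
    (hβ_int : IntegrableOn β (Ioo 0 T))
    (hA_ge_one : ∀ t ∈ Ico (0:ℝ) T, 1 ≤ A t)
    (hB_pos : ∀ t ∈ Ioo (0:ℝ) T, 0 < B t)
    (hB_int : IntegrableOn B (Ioo 0 T))
    (hA'_int : IntegrableOn A' (Ioo 0 T))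
    (hFTC : ∀ t ∈ Ico (0:ℝ) T, A t = A 0 + ∫ s in Ioo (0:ℝ) t, A' s)
    (hineq : ∀ᵐ t ∂(volume.restrict (Ioo (0:ℝ) T)),
      A' t + B t ≤ K * (α t + Real.log (B t)) * A t + β t) :
    ∀ t ∈ Ico (0:ℝ) T,
      Real.log (A t) + (∫ s in Ioo (0:ℝ) t, B s / (2 * A s))
          ≤ (Real.log (A 0) + K * (∫ s in Ioo (0:ℝ) t, α s)
              + (∫ s in Ioo (0:ℝ) t, β s) + 2 * K ^ 2 * t) * Real.exp (K * t) ∧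
      A t ≤ Real.exp ((Real.log (A 0) + K * (∫ s in Ioo (0:ℝ) t, α s)
              + (∫ s in Ioo (0:ℝ) t, β s) + 2 * K ^ 2 * t) * Real.exp (K * t)) ∧
      (∫ s in Ioo (0:ℝ) t, B s / A s)
          ≤ 2 * ((Real.log (A 0) + K * (∫ s in Ioo (0:ℝ) t, α s)
              + (∫ s in Ioo (0:ℝ) t, β s) + 2 * K ^ 2 * t) * Real.exp (K * t)) := by
  rintro t ⟨ht0, htT⟩
  have hIoo {x : ℝ} (hx : 0 ≤ x) (φ : ℝ → ℝ) : ∫ s in Ioo 0 x, φ s = ∫ s in 0..x, φ s := by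
    rw [intervalIntegral.integral_of_le hx, integral_Ioc_eq_integral_Ioo]
  have hsub : Ioo 0 t ⊆ Ioo 0 T := Ioo_subset_Ioo_right htT.le
  have hint {φ : ℝ → ℝ} (hφ : IntegrableOn φ (Ioo 0 T)) : IntervalIntegrable φ volume 0 t :=
    (intervalIntegrable_iff_integrableOn_Ioo_of_le ht0).2 (hφ.mono_set hsub)
  have hIcc : Icc 0 t ⊆ Ico 0 T := Icc_subset_Ico_right htT
  have hbound := log_add_integral_div_two_mul_le hK ht0 (hint hA'_int)
    (fun x hx ↦ by rw [hFTC x (hIcc hx), hIoo hx.1]) (fun x hx ↦ hA_ge_one x (hIcc hx))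
    (hint hB_int) (fun x hx ↦ hB_pos x (hsub hx)) (hint hα_int) (fun x hx ↦ hα_nonneg x (hsub hx))
    (hint hβ_int) (fun x hx ↦ hβ_nonneg x (hsub hx))
    (ae_restrict_of_ae_restrict_of_subset hsub hineq)
  rw [sub_zero] at hbound
  have hBA_nonneg : 0 ≤ ∫ s in 0..t, B s / (2 * A s) := by
    rw [← hIoo ht0]
    exact setIntegral_nonneg measurableSet_Ioo fun s hs ↦ div_nonneg (hB_pos s (hsub hs)).le
      (mul_pos two_pos (one_pos.trans_le (hA_ge_one s (Ioo_subset_Ico_self (hsub hs))))).le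
  have hBA : ∫ s in 0..t, B s / A s = 2 * ∫ s in 0..t, B s / (2 * A s) := by
    rw [← intervalIntegral.integral_const_mul]
    congr 1 with s
    ring
  have hlogA_nonneg : 0 ≤ log (A t) := log_nonneg (hA_ge_one t ⟨ht0, htT⟩)
  simp only [hIoo ht0]
  refine ⟨hbound, ?_, by linarith⟩
  calc A t = exp (log (A t)) := (exp_log (one_pos.trans_le (hA_ge_one t ⟨ht0, htT⟩))).symm
    _ ≤ _ := exp_le_exp.2 (by linarith)

theorem log_gronwall_intermediate_step
    (T K : ℝ) (hT : 0 < T) (hK : 0 < K)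
    (α β A B A' : ℝ → ℝ)
    (hα_nonneg : ∀ t ∈ Ioo (0:ℝ) T, 0 ≤ α t)
    (hβ_nonneg : ∀ t ∈ Ioo (0:ℝ) T, 0 ≤ β t)
    (hα_int : IntegrableOn α (Ioo 0 T))
    (hβ_int : IntegrableOn β (Ioo 0 T))
    (hA_ge_one : ∀ t ∈ Ico (0:ℝ) T, 1 ≤ A t)
    (hB_pos : ∀ t ∈ Ioo (0:ℝ) T, 0 < B t)
    (hA_int : IntegrableOn A (Ioo 0 T))
    (hB_int : IntegrableOn B (Ioo 0 T))
    (hA_cont : ContinuousOn A (Ico 0 T))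
    (hA'_int : IntegrableOn A' (Ioo 0 T))
    (hA_deriv : ∀ᵐ t ∂(volume.restrict (Ioo (0:ℝ) T)), HasDerivAt A (A' t) t)
    (hFTC : ∀ t ∈ Ico (0:ℝ) T, A t = A 0 + ∫ s in Ioo (0:ℝ) t, A' s)
    (hineq : ∀ᵐ t ∂(volume.restrict (Ioo (0:ℝ) T)),
      A' t + B t ≤ K * (α t + Real.log (B t)) * A t + β t) :
    ∀ t ∈ Ico (0:ℝ) T,
      Real.log (A t) + (∫ s in Ioo (0:ℝ) t, B s / (2 * A s))
          ≤ (Real.log (A 0) + K * (∫ s in Ioo (0:ℝ) t, α s)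
              + (∫ s in Ioo (0:ℝ) t, β s) + 2 * K ^ 2 * t) * Real.exp (K * t) ∧
      A t ≤ Real.exp ((Real.log (A 0) + K * (∫ s in Ioo (0:ℝ) t, α s)
              + (∫ s in Ioo (0:ℝ) t, β s) + 2 * K ^ 2 * t) * Real.exp (K * t)) ∧
      (∫ s in Ioo (0:ℝ) t, B s / A s)
          ≤ 2 * ((Real.log (A 0) + K * (∫ s in Ioo (0:ℝ) t, α s)
              + (∫ s in Ioo (0:ℝ) t, β s) + 2 * K ^ 2 * t) * Real.exp (K * t)) :=
  log_gronwall_intermediate_step_general T K hK α β A B A' hα_nonneg hβ_nonneg hα_int hβ_int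
    hA_ge_one hB_pos hB_int hA'_int hFTC hineq
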